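/- arXiv:1808.06564 — 2 statements merged into one kernel-verified Lean document; each statement's English description precedes it below -/
import Mathlib

section
/- Let X₁, X₂ and K be real Banach spaces, let π : K → K be a bounded linear idempotent (π ∘ π = π), and let A : X₁ → K and B : X₂ → K be bounded linear maps. Assume: (i) the map (1 − π) ∘ A, viewed as a map into the closed subspace ker π = range(1 − π), has finite-dimensional kernel, closed range, and finite-dimensional cokernel (ker π) / range((1 − π) ∘ A); (ii) the map π ∘ B, viewed as a map into the closed subspace range π = ker(1 − π), has finite-dimensional kernel, closed range, and finite-dimensional cokernel (range π) / range(π ∘ B); (iii) π ∘ A : X₁ → K and (1 − π) ∘ B : X₂ → K are compact operators. Then the bounded linear map X₁ × X₂ → K, (x, y) ↦ A x + B y, has the Fredholm properties: its kernel is finite-dimensional, its range is closed, and K / range is finite-dimensional. -/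
open Filter Topology Set Function

/-!
Split `K = ker π ⊕ range π`. Then `(x, y) ↦ A x + B y` is `S + C`, where the diagonal part
`S (x, y) = (1 - π) A x + π B y` has its two components in complementary closed subspaces, so it
inherits a finite-dimensional kernel, a closed range and a range of finite codimension from the
two pieces, and the off-diagonal part `C (x, y) = π A x + (1 - π) B y` is compact.

The three properties survive compact perturbation. On Banach spaces, having a
finite-dimensional kernel and a closed range is equivalent to `IsProperOnBounded`: bounded
sequences with convergent images have convergent subsequences. This is visibly stable under
adding a compact operator. For the cokernel, `S ≡ -C` modulo the closed range `N` of `S + C`,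
so `S` induces a compact operator into `K ⧸ N` with finite-codimensional range; by the open
mapping theorem and Riesz's theorem, `K ⧸ N` is then finite-dimensional.
-/

namespace Submodule

variable {R M : Type*}

theorem isClosed_sup_of_le_ker_of_le_range [Ring R] [AddCommGroup M] [Module R M]
    [TopologicalSpace M] [IsTopologicalAddGroup M] {π : M →L[R] M} (hπ : IsIdempotentElem π)
    {N₁ N₂ : Submodule R M} (h₁ : IsClosed (N₁ : Set M)) (h₂ : IsClosed (N₂ : Set M))
    (hN₁ : N₁ ≤ LinearMap.ker (π : M →ₗ[R] M)) (hN₂ : N₂ ≤ LinearMap.range (π : M →ₗ[R] M)) :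
    IsClosed ((N₁ ⊔ N₂ : Submodule R M) : Set M) := by
  have hfix : ∀ z ∈ N₂, π z = z := fun z hz => by
    obtain ⟨w, rfl⟩ := hN₂ hz
    exact congrArg (· w) hπ
  have hsup : ((N₁ ⊔ N₂ : Submodule R M) : Set M) = (fun z => z - π z) ⁻¹' N₁ ∩ π ⁻¹' N₂ := by
    ext z
    refine ⟨fun hz => ?_, fun ⟨hz₁, hz₂⟩ => mem_sup.2 ⟨_, hz₁, _, hz₂, sub_add_cancel z (π z)⟩⟩
    obtain ⟨a, ha, b, hb, rfl⟩ := mem_sup.1 hz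
    have hπz : π (a + b) = b := by rw [map_add, show π a = 0 from hN₁ ha, hfix b hb, zero_add]
    simp only [mem_inter_iff, mem_preimage, hπz, add_sub_cancel_right, SetLike.mem_coe]
    exact ⟨ha, hb⟩
  rw [hsup]
  exact (h₁.preimage (continuous_id.sub π.continuous)).inter (h₂.preimage π.continuous)

variable [DivisionRing R] [AddCommGroup M] [Module R M]

theorem exists_fg_sup_eq_of_cofg_comap_subtype {N P : Submodule R M} (hNP : N ≤ P)
    (hN : (N.comap P.subtype).CoFG) : ∃ W : Submodule R M, W.FG ∧ N ⊔ W = P := by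
  obtain ⟨W, hW⟩ := (N.comap P.subtype).exists_isCompl
  refine ⟨W.map P.subtype, (hN.fg_of_isCompl hW).map _, ?_⟩
  have := congrArg (map P.subtype) hW.sup_eq_top
  rwa [map_sup, map_comap_subtype, map_subtype_top, inf_eq_right.2 hNP] at this

theorem cofg_sup_of_codisjoint {N₁ N₂ P₁ P₂ : Submodule R M} (hP : Codisjoint P₁ P₂)
    (h₁ : N₁ ≤ P₁) (h₂ : N₂ ≤ P₂) (hN₁ : (N₁.comap P₁.subtype).CoFG)
    (hN₂ : (N₂.comap P₂.subtype).CoFG) : (N₁ ⊔ N₂).CoFG := by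
  obtain ⟨W₁, hW₁, hNW₁⟩ := exists_fg_sup_eq_of_cofg_comap_subtype h₁ hN₁
  obtain ⟨W₂, hW₂, hNW₂⟩ := exists_fg_sup_eq_of_cofg_comap_subtype h₂ hN₂
  refine (hW₁.sup hW₂).cofg_of_codisjoint ?_
  rw [codisjoint_comm, codisjoint_iff, sup_sup_sup_comm, hNW₁, hNW₂]
  exact hP.eq_top

end Submodule

def IsProperOnBounded {X Y : Type*} [PseudoMetricSpace X] [TopologicalSpace Y] (f : X → Y) :
    Prop :=
  ∀ ⦃u : ℕ → X⦄ ⦃y : Y⦄, Bornology.IsBounded (range u) → Tendsto (f ∘ u) atTop (𝓝 y) →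
    ∃ x, ∃ φ : ℕ → ℕ, StrictMono φ ∧ Tendsto (u ∘ φ) atTop (𝓝 x)

section Banach

variable {𝕜 E F G : Type*} [RCLike 𝕜] [NormedAddCommGroup E] [NormedSpace 𝕜 E]
  [NormedAddCommGroup F] [NormedSpace 𝕜 F] [NormedAddCommGroup G] [NormedSpace 𝕜 G]

theorem ContinuousLinearMap.exists_tendsto_zero_of_isClosed_range [CompleteSpace E]
    [CompleteSpace F] (S : E →L[𝕜] F) (hS : IsClosed (LinearMap.range (S : E →ₗ[𝕜] F) : Set F))
    {v : ℕ → E} (hv : Tendsto (S ∘ v) atTop (𝓝 0)) :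
    ∃ z : ℕ → E, (∀ n, S (z n) = S (v n)) ∧ Tendsto z atTop (𝓝 0) := by
  have : CompleteSpace (LinearMap.range (S : E →ₗ[𝕜] F)) := hS.completeSpace_coe
  obtain ⟨C, -, hC⟩ :=
    (S.codRestrict _ (LinearMap.mem_range_self (S : E →ₗ[𝕜] F))).exists_preimage_norm_le
      (by rintro ⟨_, x, rfl⟩; exact ⟨x, rfl⟩)
  choose z hSz hz using fun n => hC ⟨S (v n), LinearMap.mem_range_self _ _⟩
  refine ⟨z, fun n => congrArg Subtype.val (hSz n), squeeze_zero_norm (fun n => ?_)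
    (by simpa using (hv.norm.const_mul C))⟩
  simpa using hz n

theorem isProperOnBounded_of_finiteDimensional_ker_of_isClosed_range [CompleteSpace E]
    [CompleteSpace F] {S : E →L[𝕜] F} (hker : FiniteDimensional 𝕜 (LinearMap.ker (S : E →ₗ[𝕜] F)))
    (hS : IsClosed (LinearMap.range (S : E →ₗ[𝕜] F) : Set F)) : IsProperOnBounded S := by
  intro u y hu hy
  obtain ⟨x₀, rfl⟩ : y ∈ LinearMap.range (S : E →ₗ[𝕜] F) :=
    hS.mem_of_tendsto hy (Eventually.of_forall fun n => LinearMap.mem_range_self _ (u n))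
  obtain ⟨z, hSz, hz⟩ := S.exists_tendsto_zero_of_isClosed_range hS (v := fun n => u n - x₀)
    (by simpa [comp_def] using hy.sub_const (S x₀))
  let k : ℕ → LinearMap.ker (S : E →ₗ[𝕜] F) := fun n =>
    ⟨u n - x₀ - z n, by simp [hSz n]⟩
  have hk : Bornology.IsBounded (range k) := by
    rw [← Bornology.isBounded_image_subtype_val, ← range_comp]
    refine ((hu.sub (Bornology.isBounded_singleton (x := x₀))).sub
      (Metric.isBounded_range_of_tendsto z hz)).subset ?_
    rintro _ ⟨n, rfl⟩
    exact sub_mem_sub (sub_mem_sub (mem_range_self n) rfl) (mem_range_self n)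
  obtain ⟨w, -, φ, hφ, hw⟩ := tendsto_subseq_of_bounded hk (mem_range_self (f := k))
  refine ⟨w + x₀, φ, hφ, ?_⟩
  convert ((tendsto_subtype_rng.1 hw).add_const x₀).add (hz.comp hφ.tendsto_atTop) using 1
  · ext n; simp [k]; abel
  · simp

namespace IsProperOnBounded

theorem add_isCompactOperator {S C : E →L[𝕜] F} (hS : IsProperOnBounded S)
    (hC : IsCompactOperator C) : IsProperOnBounded (S + C) := by
  intro u y hu hy
  obtain ⟨L, hL, hCu⟩ := hC.image_subset_compact_of_bounded hu
  obtain ⟨w, -, φ, hφ, hw⟩ :=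
    hL.tendsto_subseq fun n => hCu (mem_image_of_mem C (mem_range_self n))
  have hSu : Tendsto (S ∘ u ∘ φ) atTop (𝓝 (y - w)) := by
    convert (hy.comp hφ.tendsto_atTop).sub hw using 1
    ext n; simp
  obtain ⟨x, ψ, hψ, hx⟩ := hS (hu.subset (range_comp_subset_range φ u)) hSu
  exact ⟨x, φ ∘ ψ, hφ.comp hψ, hx⟩

theorem comp_subtypeL {T : E →L[𝕜] F} (hT : IsProperOnBounded T) {Y : Submodule 𝕜 E}
    (hY : IsClosed (Y : Set E)) : IsProperOnBounded (T ∘L Y.subtypeL) := by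
  intro u y hu hy
  obtain ⟨x, φ, hφ, hx⟩ := hT (u := Subtype.val ∘ u)
    (by rwa [range_comp, Bornology.isBounded_image_subtype_val]) hy
  have hxY : x ∈ Y := hY.mem_of_tendsto hx (Eventually.of_forall fun n => (u (φ n)).2)
  exact ⟨⟨x, hxY⟩, φ, hφ, tendsto_subtype_rng.2 hx⟩

theorem finiteDimensional_ker {T : E →L[𝕜] F} (hT : IsProperOnBounded T) :
    FiniteDimensional 𝕜 (LinearMap.ker (T : E →ₗ[𝕜] F)) := by
  refine FiniteDimensional.of_isCompact_closedBall₀ 𝕜 one_pos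
    (isCompact_iff_isSeqCompact.2 fun v hv => ?_)
  have hTv : Tendsto (T ∘ (↑) ∘ v) atTop (𝓝 0) := by simp [comp_def]
  obtain ⟨x, φ, hφ, hx⟩ := hT (u := Subtype.val ∘ v) (by
    rw [range_comp, Bornology.isBounded_image_subtype_val]
    exact Metric.isBounded_closedBall.subset (range_subset_iff.2 hv)) hTv
  have hx_ker : x ∈ LinearMap.ker (T : E →ₗ[𝕜] F) :=
    T.isClosed_ker.mem_of_tendsto hx (Eventually.of_forall fun n => (v (φ n)).2)
  refine ⟨⟨x, hx_ker⟩, ?_, φ, hφ, tendsto_subtype_rng.2 hx⟩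
  exact Metric.isClosed_closedBall.mem_of_tendsto (tendsto_subtype_rng.2 hx)
    (Eventually.of_forall fun n => hv (φ n))

theorem exists_antilipschitzWith {T : E →L[𝕜] F} (hT : IsProperOnBounded T)
    (hinj : Injective T) : ∃ K, AntilipschitzWith K T := by
  by_contra! h
  have hsmall : ∀ n : ℕ, ∃ x : E, ‖x‖ = 1 ∧ ((n + 1 : NNReal) : ℝ) * ‖T x‖ < 1 := fun n => by
    by_contra! hn
    exact h _ (antilipschitz_of_bound_of_norm_one T hn)
  choose x hx_norm hx_small using hsmall
  have hTx : Tendsto (T ∘ x) atTop (𝓝 0) := by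
    refine squeeze_zero_norm (fun n => ?_) tendsto_one_div_add_atTop_nhds_zero_nat
    rw [comp_apply, le_div_iff₀' (by positivity)]
    simpa using (hx_small n).le
  obtain ⟨w, φ, hφ, hw⟩ := hT (isBounded_iff_forall_norm_le.2 ⟨1, by simp [hx_norm]⟩) hTx
  have hw_norm : ‖w‖ = 1 := tendsto_nhds_unique hw.norm (by simp [hx_norm])
  have hTw : T w = 0 :=
    tendsto_nhds_unique ((T.continuous.tendsto w).comp hw) (hTx.comp hφ.tendsto_atTop)
  rw [hinj (hTw.trans T.map_zero.symm), norm_zero] at hw_norm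
  exact zero_ne_one hw_norm

theorem isClosed_range [CompleteSpace E] {T : E →L[𝕜] F} (hT : IsProperOnBounded T) :
    IsClosed (LinearMap.range (T : E →ₗ[𝕜] F) : Set F) := by
  have := hT.finiteDimensional_ker
  obtain ⟨Y, hY_closed, hY⟩ := (Submodule.ClosedComplemented.of_finiteDimensional
    (LinearMap.ker (T : E →ₗ[𝕜] F))).exists_isClosed_isCompl
  have : CompleteSpace Y := hY_closed.completeSpace_coe
  have hinj : Injective (T ∘L Y.subtypeL) := by
    refine (injective_iff_map_eq_zero _).2 fun y hy => ?_
    exact Subtype.ext (Submodule.disjoint_def.1 hY.disjoint y hy y.2)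
  have hrange : (LinearMap.range (T : E →ₗ[𝕜] F) : Set F) = range (T ∘L Y.subtypeL) := by
    rw [← Submodule.map_eq_range_iff.2 hY.codisjoint.symm]
    ext; simp
  obtain ⟨K, hK⟩ := (hT.comp_subtypeL hY_closed).exists_antilipschitzWith hinj
  rw [hrange]
  exact hK.isClosed_range (T ∘L Y.subtypeL).uniformContinuous

end IsProperOnBounded

theorem IsCompactOperator.coprod {f : E →L[𝕜] G} {g : F →L[𝕜] G} (hf : IsCompactOperator f)
    (hg : IsCompactOperator g) : IsCompactOperator (f.coprod g) := by
  have : ⇑(f.coprod g) = f ∘ Prod.fst + g ∘ Prod.snd := by ext; simp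
  rw [this]
  exact (hf.comp_clm (.fst 𝕜 E F)).add (hg.comp_clm (.snd 𝕜 E F))

theorem IsCompactOperator.finiteDimensional_of_surjective [CompleteSpace E] [CompleteSpace F]
    {f : E →L[𝕜] F} (hf : IsCompactOperator f) (hsurj : Surjective f) :
    FiniteDimensional 𝕜 F := by
  refine FiniteDimensional.of_isCompactOperator_id
    ((isCompactOperator_iff_exists_mem_nhds_image_subset_compact _).2 ?_)
  obtain ⟨L, hL, hfL⟩ := hf.image_ball_subset_compact 1
  refine ⟨f '' Metric.ball 0 1, ?_, L, hL, by rwa [image_id]⟩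
  exact (f.isOpenMap hsurj _ Metric.isOpen_ball).mem_nhds
    ⟨0, Metric.mem_ball_self one_pos, map_zero f⟩

theorem IsCompactOperator.finiteDimensional_of_cofg_range [CompleteSpace E] [CompleteSpace F]
    {f : E →L[𝕜] F} (hf : IsCompactOperator f)
    (hrange : (LinearMap.range (f : E →ₗ[𝕜] F)).CoFG) :
    FiniteDimensional 𝕜 F := by
  obtain ⟨W, hW⟩ := (LinearMap.range (f : E →ₗ[𝕜] F)).exists_isCompl
  have : FiniteDimensional 𝕜 W := Module.Finite.iff_fg.2 (hrange.fg_of_isCompl hW)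
  refine (hf.coprod (isCompactOperator_of_locallyCompactSpace_rng W.subtypeL))
    |>.finiteDimensional_of_surjective ?_
  rw [← ContinuousLinearMap.coe_coe, ← LinearMap.range_eq_top, ContinuousLinearMap.coe_coprod,
    LinearMap.range_coprod]
  simpa using hW.sup_eq_top

theorem ContinuousLinearMap.cofg_range_add_of_isCompactOperator [CompleteSpace E]
    [CompleteSpace F] {S C : E →L[𝕜] F} (hS : (LinearMap.range (S : E →ₗ[𝕜] F)).CoFG)
    (hC : IsCompactOperator C)
    (hclosed : IsClosed (LinearMap.range ((S + C : E →L[𝕜] F) : E →ₗ[𝕜] F) : Set F)) :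
    (LinearMap.range ((S + C : E →L[𝕜] F) : E →ₗ[𝕜] F)).CoFG := by
  set N : Submodule 𝕜 F := LinearMap.range ((S + C : E →L[𝕜] F) : E →ₗ[𝕜] F)
  have : IsClosed (N : Set F) := hclosed
  have hqS : N.mkQL ∘L S = -(N.mkQL ∘L C) := by
    ext x
    rw [neg_apply, eq_neg_iff_add_eq_zero]
    exact (Submodule.Quotient.mk_eq_zero N).2 ⟨x, rfl⟩
  have hqS_compact : IsCompactOperator (N.mkQL ∘L S) := by
    rw [hqS]; exact (hC.clm_comp N.mkQL).neg
  refine hqS_compact.finiteDimensional_of_cofg_range ?_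
  have : (N ⊔ LinearMap.range (S : E →ₗ[𝕜] F)).CoFG := hS.of_le le_sup_right
  rw [ContinuousLinearMap.toLinearMap_comp, LinearMap.range_comp, Submodule.toLinearMap_mkQL]
  exact Module.Finite.equiv (Submodule.quotientQuotientEquivQuotientSup N _).symm

end Banach

/-- Splicing Fredholm pieces along a bounded idempotent `π`:
if `(1 − π) ∘ A` is Fredholm into `ker π`, `π ∘ B` is Fredholm into `range π`,
and `π ∘ A`, `(1 − π) ∘ B` are compact, then `(x, y) ↦ A x + B y` has the
Fredholm properties. -/
theorem fredholm_of_spliced_pieces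
    {X₁ X₂ K : Type*}
    [NormedAddCommGroup X₁] [NormedSpace ℝ X₁] [CompleteSpace X₁]
    [NormedAddCommGroup X₂] [NormedSpace ℝ X₂] [CompleteSpace X₂]
    [NormedAddCommGroup K] [NormedSpace ℝ K] [CompleteSpace K]
    (π : K →L[ℝ] K) (hπ : π.comp π = π)
    (A : X₁ →L[ℝ] K) (B : X₂ →L[ℝ] K)
    -- (i) `(1 − π) ∘ A`, viewed as a map into `ker π = range (1 − π)`, is Fredholm
    (hA_ker : FiniteDimensional ℝ (LinearMap.ker ((1 - π).comp A : X₁ →ₗ[ℝ] K)))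
    (hA_closed : IsClosed ((LinearMap.range ((1 - π).comp A : X₁ →ₗ[ℝ] K)) : Set K))
    (hA_le : LinearMap.range ((1 - π).comp A : X₁ →ₗ[ℝ] K) ≤ LinearMap.ker (π : K →ₗ[ℝ] K))
    (hA_coker : FiniteDimensional ℝ
      (↥(LinearMap.ker (π : K →ₗ[ℝ] K)) ⧸
        (LinearMap.range ((1 - π).comp A : X₁ →ₗ[ℝ] K)).comap (LinearMap.ker (π : K →ₗ[ℝ] K)).subtype))
    -- (ii) `π ∘ B`, viewed as a map into `range π = ker (1 − π)`, is Fredholm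
    (hB_ker : FiniteDimensional ℝ (LinearMap.ker (π.comp B : X₂ →ₗ[ℝ] K)))
    (hB_closed : IsClosed ((LinearMap.range (π.comp B : X₂ →ₗ[ℝ] K)) : Set K))
    (hB_le : LinearMap.range (π.comp B : X₂ →ₗ[ℝ] K) ≤ LinearMap.range (π : K →ₗ[ℝ] K))
    (hB_coker : FiniteDimensional ℝ
      (↥(LinearMap.range (π : K →ₗ[ℝ] K)) ⧸
        (LinearMap.range (π.comp B : X₂ →ₗ[ℝ] K)).comap (LinearMap.range (π : K →ₗ[ℝ] K)).subtype))
    -- (iii) compactness of the cross terms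
    (hπA : IsCompactOperator ⇑(π.comp A))
    (hB1π : IsCompactOperator ⇑((1 - π).comp B)) :
    FiniteDimensional ℝ (LinearMap.ker (A.coprod B : X₁ × X₂ →ₗ[ℝ] K)) ∧
    IsClosed ((LinearMap.range (A.coprod B : X₁ × X₂ →ₗ[ℝ] K)) : Set K) ∧
    FiniteDimensional ℝ (K ⧸ LinearMap.range (A.coprod B : X₁ × X₂ →ₗ[ℝ] K)) := by
  have hπ_compl : IsCompl (LinearMap.ker (π : K →ₗ[ℝ] K)) (LinearMap.range (π : K →ₗ[ℝ] K)) :=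
    (LinearMap.IsIdempotentElem.isCompl (congrArg ContinuousLinearMap.toLinearMap hπ)).symm
  set S := ((1 - π).comp A).coprod (π.comp B)
  set C := (π.comp A).coprod ((1 - π).comp B)
  have hsplit : A.coprod B = S + C := by ext <;> simp [S, C]
  have hS_ker : FiniteDimensional ℝ (LinearMap.ker (S : X₁ × X₂ →ₗ[ℝ] K)) := by
    rw [ContinuousLinearMap.coe_coprod,
      LinearMap.ker_coprod_of_disjoint_range _ _ (hπ_compl.disjoint.mono hA_le hB_le)]
    exact Module.Finite.iff_fg.2
      ((Module.Finite.iff_fg.1 hA_ker).prod (Module.Finite.iff_fg.1 hB_ker))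
  have hS_closed : IsClosed (LinearMap.range (S : X₁ × X₂ →ₗ[ℝ] K) : Set K) := by
    rw [ContinuousLinearMap.coe_coprod, LinearMap.range_coprod]
    exact Submodule.isClosed_sup_of_le_ker_of_le_range hπ hA_closed hB_closed hA_le hB_le
  have hS_coker : (LinearMap.range (S : X₁ × X₂ →ₗ[ℝ] K)).CoFG := by
    rw [ContinuousLinearMap.coe_coprod, LinearMap.range_coprod]
    exact Submodule.cofg_sup_of_codisjoint hπ_compl.codisjoint hA_le hB_le hA_coker hB_coker
  have hC : IsCompactOperator C := hπA.coprod hB1π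
  have hT := (isProperOnBounded_of_finiteDimensional_ker_of_isClosed_range hS_ker hS_closed)
    |>.add_isCompactOperator hC
  rw [hsplit]
  exact ⟨hT.finiteDimensional_ker, hT.isClosed_range,
    ContinuousLinearMap.cofg_range_add_of_isCompactOperator hS_coker hC hT.isClosed_range⟩
end

section
/- Let X be a real Banach space, let C > 0, and let S : X → X be a map with S(0) = 0 satisfying the quadratic estimate ‖S(v₂) − S(v₁)‖ ≤ C (‖v₁‖ + ‖v₂‖) ‖v₂ − v₁‖ for all v₁, v₂ ∈ X. Then for every e ∈ X with ‖e‖ ≤ 1/(16 C) there exists a unique V ∈ X with ‖V‖ ≤ 1/(8 C) satisfying V = S(V) − e, and this solution obeys ‖V‖ ≤ (4/3) ‖e‖. -/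
/-! On the closed ball of radius `r` the quadratic estimate makes `S` Lipschitz with constant
`2 C r`, and together with `S 0 = 0` it gives `‖S v‖ ≤ C ‖v‖²`. For `r = 1/(8C)` and
`‖e‖ ≤ r/2` the map `v ↦ S v - e` is therefore a `1/4`-contraction of the closed `r`-ball
into itself, and the Banach fixed point theorem yields `V` and its uniqueness in the ball.
The bound on `‖V‖` comes from `‖V‖ ≤ C ‖V‖² + ‖e‖` with `C ‖V‖ ≤ 1/8`. -/

open Metric Function Set NNReal

theorem LipschitzOnWith.existsUnique_isFixedPt {α : Type*} [MetricSpace α] {K : ℝ≥0}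
    {f : α → α} {s : Set α} (hsc : IsComplete s) (hs : s.Nonempty) (hsf : MapsTo f s s)
    (hf : LipschitzOnWith K f s) (hK : K < 1) :
    ∃! x, x ∈ s ∧ IsFixedPt f x := by
  have hcontr : ContractingWith K (hsf.restrict f s s) := ⟨hK, hf.mapsToRestrict hsf⟩
  obtain ⟨x, hxs, hfx, -⟩ :=
    hcontr.exists_fixedPoint' hsc hsf hs.some_mem (edist_ne_top _ _)
  refine ⟨x, ⟨hxs, hfx⟩, fun y ⟨hys, hfy⟩ => ?_⟩
  have := hcontr.fixedPoint_unique' (x := ⟨y, hys⟩) (y := ⟨x, hxs⟩)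
    (Subtype.ext hfy) (Subtype.ext hfx)
  exact congrArg Subtype.val this

section QuadraticEstimate

variable {E : Type*} [SeminormedAddCommGroup E]

def HasQuadraticEstimate (C : ℝ) (S : E → E) : Prop :=
  ∀ v₁ v₂ : E, ‖S v₂ - S v₁‖ ≤ C * (‖v₁‖ + ‖v₂‖) * ‖v₂ - v₁‖

variable {C : ℝ} {S : E → E}

theorem HasQuadraticEstimate.norm_le_mul_norm_sq
    (hS : HasQuadraticEstimate C S) (hS0 : S 0 = 0) (v : E) : ‖S v‖ ≤ C * ‖v‖ ^ 2 := by
  simpa [hS0, sq, mul_assoc] using hS 0 v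

theorem HasQuadraticEstimate.lipschitzOnWith_closedBall
    (hS : HasQuadraticEstimate C S) (hC : 0 ≤ C) {α : ℝ} {K : ℝ≥0} (hK : 2 * C * α ≤ K) :
    LipschitzOnWith K S (closedBall 0 α) := by
  refine LipschitzOnWith.of_dist_le_mul fun v hv w hw => ?_
  rw [mem_closedBall_zero_iff] at hv hw
  rw [dist_eq_norm, dist_eq_norm]
  calc ‖S v - S w‖ ≤ C * (‖w‖ + ‖v‖) * ‖v - w‖ := hS w v
    _ ≤ K * ‖v - w‖ := by gcongr; nlinarith

theorem HasQuadraticEstimate.mapsTo_closedBall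
    (hS : HasQuadraticEstimate C S) (hS0 : S 0 = 0) (hC : 0 ≤ C)
    {e : E} {r : ℝ} (hr : C * r ^ 2 + ‖e‖ ≤ r) :
    MapsTo (fun v => S v - e) (closedBall 0 r) (closedBall 0 r) := by
  intro v hv
  rw [mem_closedBall_zero_iff] at hv ⊢
  calc ‖S v - e‖ ≤ ‖S v‖ + ‖e‖ := norm_sub_le _ _
    _ ≤ C * r ^ 2 + ‖e‖ := by grw [hS.norm_le_mul_norm_sq hS0 v, hv]
    _ ≤ r := hr

theorem HasQuadraticEstimate.one_sub_mul_norm_le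
    (hS : HasQuadraticEstimate C S) (hS0 : S 0 = 0)
    {e V : E} (hV : V = S V - e) : (1 - C * ‖V‖) * ‖V‖ ≤ ‖e‖ := by
  have : ‖V‖ ≤ ‖S V‖ + ‖e‖ := (congrArg norm hV).trans_le (norm_sub_le _ _)
  nlinarith [hS.norm_le_mul_norm_sq hS0 V]

end QuadraticEstimate

/-- Fixed point for maps with quadratic leading term: if
`‖S v₂ − S v₁‖ ≤ C (‖v₁‖ + ‖v₂‖) ‖v₂ − v₁‖` and `S 0 = 0`, then for every `e` with
`‖e‖ ≤ 1/(16 C)` the equation `V = S V − e` has a unique solution with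
`‖V‖ ≤ 1/(8 C)`, and it satisfies `‖V‖ ≤ (4/3) ‖e‖`. -/
theorem quadratic_contraction_fixed_point
    {X : Type*} [NormedAddCommGroup X] [NormedSpace ℝ X] [CompleteSpace X]
    (C : ℝ) (hC : 0 < C)
    (S : X → X) (hS0 : S 0 = 0)
    (hS : ∀ v₁ v₂ : X, ‖S v₂ - S v₁‖ ≤ C * (‖v₁‖ + ‖v₂‖) * ‖v₂ - v₁‖)
    (e : X) (he : ‖e‖ ≤ 1 / (16 * C)) :
    ∃ V : X, (‖V‖ ≤ 1 / (8 * C) ∧ V = S V - e) ∧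
      ‖V‖ ≤ (4 / 3) * ‖e‖ ∧
      ∀ W : X, ‖W‖ ≤ 1 / (8 * C) → W = S W - e → W = V := by
  have hQ : HasQuadraticEstimate C S := hS
  set r := 1 / (8 * C) with hr_def
  have hCr : C * r = 1 / 8 := by rw [hr_def]; field_simp
  have hr : 0 ≤ r := by positivity
  have he : ‖e‖ ≤ r / 2 := by rw [hr_def]; convert he using 1; ring
  have hmaps : MapsTo (fun v => S v - e) (closedBall 0 r) (closedBall 0 r) :=
    hQ.mapsTo_closedBall hS0 hC.le (r := r) (by rw [sq, ← mul_assoc, hCr]; linarith)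
  have hlip : LipschitzOnWith (1 / 4) (fun v => S v - e) (closedBall 0 r) := by
    have := hQ.lipschitzOnWith_closedBall (α := r) (K := 1 / 4) hC.le
      (by rw [mul_assoc, hCr]; norm_num)
    simpa only [LipschitzOnWith, edist_sub_right] using this
  obtain ⟨V, ⟨hVr, hVfix⟩, hVuniq⟩ := LipschitzOnWith.existsUnique_isFixedPt
    isClosed_closedBall.isComplete (nonempty_closedBall.2 hr) hmaps hlip (by norm_num)
  rw [mem_closedBall_zero_iff] at hVr
  refine ⟨V, ⟨hVr, hVfix.symm⟩, ?_, fun W hWr hWfix =>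
    hVuniq W ⟨mem_closedBall_zero_iff.2 hWr, hWfix.symm⟩⟩
  have hV := hQ.one_sub_mul_norm_le hS0 hVfix.symm
  nlinarith [hV, mul_le_mul_of_nonneg_left hVr hC.le, norm_nonneg V]
end
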